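/- Let a > 0. For every nonnegative integer n and every real x, ∑_{i=0}^{n} A_i(x) Δ^i C_n^{(a)}(x-1) = (-1)^{n-1} C_n^{(a)}(-1) C_{n-1}^{(a)}(x-2), where A_0 = (-1)^{n-1} C_{n-1}^{(a)}(-2) and, for i ≥ 1, A_i(x) = ∑_{k=1}^i (-1)^k C_{i-k}^{(-a)}(-x+1) [C_k^{(a)}(-1) C_k^{(a)}(x-2) − C_k^{(a)}(-2) C_k^{(a)}(x-1)]. -/

import Mathlib

/-!
`C_n^{(a)}(x)` is the coefficient of `t^n` in `(1 + t)^x e^{-a t}`. Multiplying this series by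
`1 + t` shifts `x` by one, whence `Δ C_{n+1}^{(a)} = C_n^{(a)}`; and the series of `C^{(-a)}(-y)`
and of `C^{(a)}(y)` are inverse to each other. Now `A_i(x)` is the convolution of
`(-1)^k D_k(x)`, where `D_k(x) = C_k(-1) C_k(x-2) - C_k(-2) C_k(x-1)` (so `D_0 = 0`), with the
first of these series at `y = x - 1`, so the sum over `i ≥ 1` collapses to `(-1)^n D_n(x)`.
Pascal's rule `C_n(y+1) = C_n(y) + C_{n-1}(y)` at `y = -2` and `y = x - 2` then turns
`A_0 C_n(x-1) + (-1)^n D_n(x)` into the right-hand side.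
-/

/-- Generalized binomial coefficient `x(x-1)⋯(x-k+1)/k!`. -/
noncomputable def genChoose (x : ℝ) (k : ℕ) : ℝ :=
  (∏ j ∈ Finset.range k, (x - (j : ℝ))) / (Nat.factorial k : ℝ)

/-- The Charlier polynomial `C_n^{(a)}(x) = ∑_{k=0}^n (x choose k) (-a)^{n-k}/(n-k)!`. -/
noncomputable def charlier (a : ℝ) (n : ℕ) (x : ℝ) : ℝ :=
  ∑ k ∈ Finset.range (n + 1),
    genChoose x k * (-a) ^ (n - k) / (Nat.factorial (n - k) : ℝ)

/-- Charlier polynomial with integer index, with the convention `C_{-1}^{(a)} ≡ 0`. -/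
noncomputable def charlierZ (a : ℝ) (n : ℤ) (x : ℝ) : ℝ :=
  if 0 ≤ n then charlier a n.toNat x else 0

/-- Forward difference operator `Δf(x) = f(x+1) - f(x)`. -/
def fdiff (f : ℝ → ℝ) : ℝ → ℝ := fun x => f (x + 1) - f x

/-- Backward difference operator `∇f(x) = f(x) - f(x-1)`. -/
def bdiff (f : ℝ → ℝ) : ℝ → ℝ := fun x => f x - f (x - 1)

/-- The generalized Charlier polynomial
`C_n^{a,N}(x) = [1 + N(-1)^n C_n^{(a)}(-1)] C_n^{(a)}(x) - N(-1)^n C_n^{(a)}(0) C_n^{(a)}(x-1)`. -/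
noncomputable def genCharlier (a N : ℝ) (n : ℕ) (x : ℝ) : ℝ :=
  (1 + N * (-1) ^ n * charlier a n (-1)) * charlier a n x
    - N * (-1) ^ n * charlier a n 0 * charlier a n (x - 1)

/-- The coefficient `A_i(x)` (for `i ≥ 1`) of the difference equation. -/
noncomputable def Acoef (a : ℝ) (i : ℕ) (x : ℝ) : ℝ :=
  ∑ k ∈ Finset.Icc 1 i, (-1 : ℝ) ^ k * charlier (-a) (i - k) (-x + 1) *
    (charlier a k (-1) * charlier a k (x - 2) - charlier a k (-2) * charlier a k (x - 1))

/-- The coefficient `A_0 = (-1)^{n-1} C_{n-1}^{(a)}(-2)` (with `C_{-1}^{(a)} ≡ 0`). -/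
noncomputable def A0coef (a : ℝ) (n : ℕ) : ℝ :=
  (-1 : ℝ) ^ ((n : ℤ) - 1) * charlierZ a ((n : ℤ) - 1) (-2)

open Finset PowerSeries

theorem genChoose_eq_ringChoose (x : ℝ) (k : ℕ) : genChoose x k = Ring.choose x k := by
  rw [Ring.choose_eq_smul, ← Polynomial.aeval_eq_smeval, Polynomial.aeval_def,
    Polynomial.eval₂_eq_eval_map, descPochhammer_map, descPochhammer_eval_eq_prod_range,
    genChoose, smul_eq_mul, div_eq_inv_mul]

theorem sum_range_mul_coeff_of_mul_eq_one {R : Type*} [CommRing R] {S T : R⟦X⟧}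
    (hST : S * T = 1) (f : ℕ → R) (n : ℕ) :
    ∑ i ∈ range (n + 1), (∑ k ∈ range (i + 1), f k * coeff (i - k) S) * coeff (n - i) T
      = f n := by
  have h := congrArg (coeff n) (mul_assoc (PowerSeries.mk f) S T)
  rw [hST, mul_one, coeff_mk] at h
  simpa only [coeff_mul, Nat.sum_antidiagonal_eq_sum_range_succ_mk, coeff_mk] using h

theorem mk_ringChoose_neg_mul (y : ℝ) :
    PowerSeries.mk (Ring.choose (-y)) * PowerSeries.mk (Ring.choose y) = 1 := by
  ext n
  rw [coeff_mul, coeff_one, ← Ring.choose_zero_ite ℝ, ← neg_add_cancel y,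
    Ring.add_choose_eq n (Commute.all _ _)]
  simp only [coeff_mk]

theorem mk_ringChoose_add_one (y : ℝ) :
    PowerSeries.mk (Ring.choose (y + 1)) = (1 + X) * PowerSeries.mk (Ring.choose y) := by
  ext n
  rcases n with _ | n
  · simp
  · rw [add_mul, map_add, one_mul, coeff_succ_X_mul, coeff_mk, coeff_mk, coeff_mk,
      Ring.choose_succ_succ, add_comm]

noncomputable def charlierSeries (a x : ℝ) : ℝ⟦X⟧ :=
  PowerSeries.mk (Ring.choose x) * rescale (-a) (exp ℝ)

theorem coeff_charlierSeries (a x : ℝ) (n : ℕ) :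
    coeff n (charlierSeries a x) = charlier a n x := by
  simp only [charlierSeries, charlier, coeff_mul, Nat.sum_antidiagonal_eq_sum_range_succ_mk,
    coeff_mk, coeff_rescale, coeff_exp, genChoose_eq_ringChoose]
  refine sum_congr rfl fun k _ => ?_
  simp [div_eq_mul_inv, mul_assoc]

theorem charlierSeries_neg_mul (a y : ℝ) : charlierSeries (-a) (-y) * charlierSeries a y = 1 := by
  rw [charlierSeries, charlierSeries, mul_mul_mul_comm, mk_ringChoose_neg_mul,
    exp_mul_exp_eq_exp_add, neg_neg, add_neg_cancel, rescale_zero]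
  simp

theorem charlierSeries_add_one (a x : ℝ) :
    charlierSeries a (x + 1) = (1 + X) * charlierSeries a x := by
  rw [charlierSeries, charlierSeries, mk_ringChoose_add_one, mul_assoc]

theorem charlier_zero (a x : ℝ) : charlier a 0 x = 1 := by
  simp [charlier, genChoose]

theorem charlier_succ_add_one (a x : ℝ) (n : ℕ) :
    charlier a (n + 1) (x + 1) = charlier a (n + 1) x + charlier a n x := by
  simp only [← coeff_charlierSeries, charlierSeries_add_one, add_mul, one_mul, map_add,
    coeff_succ_X_mul]

theorem fdiff_charlier_succ (a : ℝ) (n : ℕ) : fdiff (charlier a (n + 1)) = charlier a n := by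
  ext x
  rw [fdiff, charlier_succ_add_one, add_sub_cancel_left]

theorem iterate_fdiff_charlier (a : ℝ) {i n : ℕ} (h : i ≤ n) :
    fdiff^[i] (charlier a n) = charlier a (n - i) := by
  induction i generalizing n with
  | zero => rfl
  | succ i ih =>
    obtain ⟨m, rfl⟩ : ∃ m, n = m + 1 := ⟨n - 1, by omega⟩
    rw [Function.iterate_succ_apply, fdiff_charlier_succ, ih (by omega), Nat.add_sub_add_right]

theorem sum_charlier_inverse_convolution (a y : ℝ) (f : ℕ → ℝ) (n : ℕ) :
    ∑ i ∈ range (n + 1),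
        (∑ k ∈ range (i + 1), f k * charlier (-a) (i - k) (-y)) * charlier a (n - i) y
      = f n := by
  simpa only [coeff_charlierSeries] using
    sum_range_mul_coeff_of_mul_eq_one (charlierSeries_neg_mul a y) f n

theorem Acoef_eq_sum_range (a : ℝ) (i : ℕ) (x : ℝ) :
    Acoef a i x = ∑ k ∈ range (i + 1), (-1 : ℝ) ^ k *
      (charlier a k (-1) * charlier a k (x - 2) - charlier a k (-2) * charlier a k (x - 1)) *
      charlier (-a) (i - k) (-(x - 1)) := by
  rw [Nat.range_succ_eq_Icc_zero, ← insert_Icc_add_one_left_eq_Icc (Nat.zero_le i),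
    sum_insert (by simp), Acoef]
  simp only [charlier_zero, sub_self, mul_zero, zero_mul, zero_add, neg_sub', sub_neg_eq_add]
  refine sum_congr rfl fun k _ => ?_
  ring

theorem sum_Acoef_mul_charlier (a : ℝ) (n : ℕ) (x : ℝ) :
    ∑ i ∈ range (n + 1), Acoef a i x * charlier a (n - i) (x - 1)
      = (-1 : ℝ) ^ n *
        (charlier a n (-1) * charlier a n (x - 2) - charlier a n (-2) * charlier a n (x - 1)) := by
  simp only [Acoef_eq_sum_range]
  exact sum_charlier_inverse_convolution a (x - 1) (fun k => (-1 : ℝ) ^ k *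
    (charlier a k (-1) * charlier a k (x - 2) - charlier a k (-2) * charlier a k (x - 1))) n

theorem charlier_Acoef_sum_shifted_eq_general (a : ℝ) (n : ℕ) (x : ℝ) :
    ∑ i ∈ Finset.range (n + 1),
        (if i = 0 then A0coef a n else Acoef a i x) * fdiff^[i] (charlier a n) (x - 1)
      = (-1 : ℝ) ^ ((n : ℤ) - 1) * charlier a n (-1) * charlierZ a ((n : ℤ) - 1) (x - 2) := by
  have split_A0 : ∀ i ∈ range (n + 1),
      (if i = 0 then A0coef a n else Acoef a i x) * fdiff^[i] (charlier a n) (x - 1)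
        = (if i = 0 then A0coef a n * charlier a n (x - 1) else 0)
          + Acoef a i x * charlier a (n - i) (x - 1) := by
    intro i hi
    rw [iterate_fdiff_charlier a (Nat.lt_succ_iff.mp (mem_range.mp hi))]
    split_ifs with hi0
    · simp [hi0, Acoef]
    · rw [zero_add]
  rw [sum_congr rfl split_A0, sum_add_distrib, sum_ite_eq' _ _ _, if_pos (by simp),
    sum_Acoef_mul_charlier]
  rcases n with _ | m
  · simp [A0coef, charlierZ, charlier_zero]
  · have hm : ((m + 1 : ℕ) : ℤ) - 1 = m := by push_cast; ring
    have pascal_neg_two :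
        charlier a (m + 1) (-1) = charlier a (m + 1) (-2) + charlier a m (-2) := by
      convert charlier_succ_add_one a (-2) m using 2; norm_num
    have pascal_x :
        charlier a (m + 1) (x - 1) = charlier a (m + 1) (x - 2) + charlier a m (x - 2) := by
      convert charlier_succ_add_one a (x - 2) m using 2; ring
    simp only [A0coef, charlierZ, hm, Nat.cast_nonneg, if_true, Int.toNat_natCast, zpow_natCast]
    rw [pascal_neg_two, pascal_x]
    ring

/-- `∑_{i=0}^n A_i(x) Δ^i C_n^{(a)}(x-1) = (-1)^{n-1} C_n^{(a)}(-1) C_{n-1}^{(a)}(x-2)`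
(with the convention `C_{-1}^{(a)} ≡ 0`). -/
theorem charlier_Acoef_sum_shifted_eq (a : ℝ) (ha : 0 < a) (n : ℕ) (x : ℝ) :
    ∑ i ∈ Finset.range (n + 1),
        (if i = 0 then A0coef a n else Acoef a i x) * fdiff^[i] (charlier a n) (x - 1)
      = (-1 : ℝ) ^ ((n : ℤ) - 1) * charlier a n (-1) * charlierZ a ((n : ℤ) - 1) (x - 2) :=
  charlier_Acoef_sum_shifted_eq_general a n x
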